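/- Under the setting of the heavy ball differential inclusion ẇ = -ry, ẏ ∈ D_F(w) - y with F bounded below by F*, any solution (w,y) on [0,T] satisfies ∫₀ᵀ ‖ẇ(t)‖ dt ≤ rT + E(w(0),y(0)) - F*, where E(w,y) = F(w) + (r/2)‖y‖². -/

import Mathlib

/-!
Along a solution the energy `E(w, y) = F(w) + (r/2)‖y‖²` dissipates at rate `r‖y‖²`, so
`∫₀ᵀ r‖y‖² = E(w(0), y(0)) - E(w(T), y(T)) ≤ E(w(0), y(0)) - F*`. Since `‖ẇ‖ = r‖y‖ ≤ r + r‖y‖²`,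
the length of `w` is at most `rT` plus this dissipated energy.
-/

open MeasureTheory Set

section HeavyBall

variable {E : Type*} [NormedAddCommGroup E] [InnerProductSpace ℝ E]

noncomputable def heavyBallEnergy (F : E → ℝ) (r : ℝ) (w y : E) : ℝ :=
  F w + r / 2 * ‖y‖ ^ 2

theorem hasDerivAt_heavyBallEnergy {F : E → ℝ} {r t : ℝ} {w y : ℝ → E} {v : E}
    (hF : HasDerivAt (fun s => F (w s)) (inner ℝ v (-(r • y t))) t)
    (hy : HasDerivAt y (v - y t) t) :
    HasDerivAt (fun s => heavyBallEnergy F r (w s) (y s)) (-(r * ‖y t‖ ^ 2)) t := by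
  refine (hF.add (hy.norm_sq.const_mul (r / 2))).congr_deriv ?_
  rw [inner_neg_right, real_inner_smul_right, inner_sub_right, real_inner_self_eq_norm_sq,
    real_inner_comm]
  ring

theorem heavyBallEnergy_sub_eq_integral {F : E → ℝ} {r a b : ℝ} {w y : ℝ → E} (hab : a ≤ b)
    (hsol : ∀ t ∈ Icc a b, ∃ v, HasDerivAt y (v - y t) t ∧
      HasDerivAt (fun s => F (w s)) (inner ℝ v (-(r • y t))) t) :
    heavyBallEnergy F r (w a) (y a) - heavyBallEnergy F r (w b) (y b) =
      ∫ t in a..b, r * ‖y t‖ ^ 2 := by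
  have hycont : ContinuousOn y (Icc a b) := fun t ht => by
    obtain ⟨v, hy, -⟩ := hsol t ht
    exact hy.continuousAt.continuousWithinAt
  have hdecay : ∀ t ∈ uIcc a b,
      HasDerivAt (fun s => heavyBallEnergy F r (w s) (y s)) (-(r * ‖y t‖ ^ 2)) t := by
    intro t ht
    obtain ⟨v, hy, hF⟩ := hsol t (uIcc_of_le hab ▸ ht)
    exact hasDerivAt_heavyBallEnergy hF hy
  have hint : IntervalIntegrable (fun t => -(r * ‖y t‖ ^ 2)) volume a b :=
    ((hycont.norm.pow 2).const_smul r).neg.intervalIntegrable_of_Icc hab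
  rw [← neg_sub, ← intervalIntegral.integral_eq_sub_of_hasDerivAt hdecay hint,
    intervalIntegral.integral_neg, neg_neg]

end HeavyBall

theorem integral_mul_le_add_integral_mul_sq {f : ℝ → ℝ} {r a b : ℝ} (hr : 0 ≤ r) (hab : a ≤ b)
    (hf : ContinuousOn f (Icc a b)) :
    ∫ t in a..b, r * f t ≤ r * (b - a) + ∫ t in a..b, r * f t ^ 2 := by
  have hint : IntervalIntegrable (fun t => r * f t ^ 2) volume a b :=
    ((hf.pow 2).const_smul r).intervalIntegrable_of_Icc hab
  have hle : ∀ t ∈ Icc a b, r * f t ≤ r + r * f t ^ 2 := fun t _ => by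
    nlinarith [mul_nonneg hr (sq_nonneg (f t - 1 / 2))]
  calc ∫ t in a..b, r * f t ≤ ∫ t in a..b, (r + r * f t ^ 2) :=
        intervalIntegral.integral_mono_on hab ((hf.const_smul r).intervalIntegrable_of_Icc hab)
          (intervalIntegrable_const.add hint) hle
    _ = r * (b - a) + ∫ t in a..b, r * f t ^ 2 := by
        rw [intervalIntegral.integral_add intervalIntegrable_const hint,
          intervalIntegral.integral_const, smul_eq_mul, mul_comm]

theorem curve_length_bound_general {p : ℕ}
    (F : EuclideanSpace ℝ (Fin p) → ℝ)
    (D_F : EuclideanSpace ℝ (Fin p) → Set (EuclideanSpace ℝ (Fin p)))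
    (Fstar : ℝ) (hFstar : ∀ x, Fstar ≤ F x)
    (r T : ℝ) (hr : 0 < r) (hT : 0 ≤ T)
    (w y w' y' : ℝ → EuclideanSpace ℝ (Fin p))
    (hy : ∀ t ∈ Set.Icc (0:ℝ) T, HasDerivAt y (y' t) t)
    (hw' : ∀ t ∈ Set.Icc (0:ℝ) T, w' t = -(r • y t))
    (hy' : ∀ t ∈ Set.Icc (0:ℝ) T, ∃ v ∈ D_F (w t), y' t = v - y t)
    (hchain : ∀ t ∈ Set.Icc (0:ℝ) T, ∀ v ∈ D_F (w t),
      HasDerivAt (fun s => F (w s)) ((inner ℝ v (w' t) : ℝ)) t) :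
    ∫ t in (0:ℝ)..T, ‖w' t‖
      ≤ r * T + (F (w 0) + (r / 2) * ‖y 0‖ ^ 2) - Fstar := by
  have hsol : ∀ t ∈ Icc 0 T, ∃ v, HasDerivAt y (v - y t) t ∧
      HasDerivAt (fun s => F (w s)) (inner ℝ v (-(r • y t))) t := by
    intro t ht
    obtain ⟨v, hv, hy'v⟩ := hy' t ht
    exact ⟨v, hy'v ▸ hy t ht, hw' t ht ▸ hchain t ht v hv⟩
  have hycont : ContinuousOn y (Icc 0 T) := fun t ht => (hy t ht).continuousAt.continuousWithinAt
  have hnorm : ∀ t ∈ uIcc 0 T, ‖w' t‖ = r * ‖y t‖ := fun t ht => by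
    rw [hw' t (uIcc_of_le hT ▸ ht), norm_neg, norm_smul, Real.norm_of_nonneg hr.le]
  calc ∫ t in (0:ℝ)..T, ‖w' t‖ = ∫ t in (0:ℝ)..T, r * ‖y t‖ :=
        intervalIntegral.integral_congr hnorm
    _ ≤ r * (T - 0) + ∫ t in (0:ℝ)..T, r * ‖y t‖ ^ 2 :=
        integral_mul_le_add_integral_mul_sq hr.le hT hycont.norm
    _ = r * T + (heavyBallEnergy F r (w 0) (y 0) - heavyBallEnergy F r (w T) (y T)) := by
        rw [heavyBallEnergy_sub_eq_integral hT hsol, sub_zero]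
    _ ≤ r * T + (F (w 0) + (r / 2) * ‖y 0‖ ^ 2) - Fstar := by
        have hyT : 0 ≤ r / 2 * ‖y T‖ ^ 2 := by positivity
        unfold heavyBallEnergy
        linarith [hFstar (w T)]

/-- Curve length bound for the `w`-component of a solution of the heavy ball
differential inclusion `ẇ = -ry`, `ẏ ∈ D_F(w) - y`, with `F` bounded below by `F*`:
`∫₀ᵀ ‖ẇ(t)‖ dt ≤ rT + E(w(0),y(0)) - F*` where `E(w,y) = F(w) + (r/2)‖y‖²`. -/
theorem curve_length_bound {p : ℕ}
    (F : EuclideanSpace ℝ (Fin p) → ℝ)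
    (D_F : EuclideanSpace ℝ (Fin p) → Set (EuclideanSpace ℝ (Fin p)))
    (hlip : LocallyLipschitz F)
    (Fstar : ℝ) (hFstar : ∀ x, Fstar ≤ F x)
    (r T : ℝ) (hr : 0 < r) (hT : 0 ≤ T)
    (w y w' y' : ℝ → EuclideanSpace ℝ (Fin p))
    (hw : ∀ t ∈ Set.Icc (0:ℝ) T, HasDerivAt w (w' t) t)
    (hy : ∀ t ∈ Set.Icc (0:ℝ) T, HasDerivAt y (y' t) t)
    (hw' : ∀ t ∈ Set.Icc (0:ℝ) T, w' t = -(r • y t))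
    (hy' : ∀ t ∈ Set.Icc (0:ℝ) T, ∃ v ∈ D_F (w t), y' t = v - y t)
    (hchain : ∀ t ∈ Set.Icc (0:ℝ) T, ∀ v ∈ D_F (w t),
      HasDerivAt (fun s => F (w s)) ((inner ℝ v (w' t) : ℝ)) t) :
    ∫ t in (0:ℝ)..T, ‖w' t‖
      ≤ r * T + (F (w 0) + (r / 2) * ‖y 0‖ ^ 2) - Fstar :=
  curve_length_bound_general F D_F Fstar hFstar r T hr hT w y w' y' hy hw' hy' hchain
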